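/- arXiv:2012.05233 — 2 statements merged into one kernel-verified Lean document; each statement's English description precedes it below -/
import Mathlib

section
/- The function h̃ : {−1,1}^n × {−1,1}^n → {−1,0,1}, viewed as a function of 2n Boolean input coordinates, is transitive: for all coordinates i, j ∈ [2n] there exists a permutation σ of [2n] with σ(i) = j such that h̃ is invariant under permuting its input coordinates by σ. -/
/-!
Translating the index `t ↦ t ⊕ u` multiplies the Hadamard codeword `H(s)` by the sign
`H(s)_u`, so it maps `{H(s), −H(s)}` to itself; hence `h̃` is invariant under translating
either half of its input, and these translations act transitively on each half. Since
`IP` is symmetric, `h̃` is also invariant under swapping the two halves, which moves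
coordinates between the halves.
-/

/-- Encoding of a `{-1,1}`-bit by a Boolean: `true ↦ -1`, `false ↦ 1`. -/
def pm (b : Bool) : ℝ := if b then -1 else 1

/-- The inner product function `IP_m(s,t) = (−1)^{#{i : s_i = t_i = −1}}`. -/
def IP {m : ℕ} (s t : Fin m → Bool) : ℝ := ∏ i, pm (s i && t i)

/-- The Hadamard codeword of `s ∈ {−1,1}^m`: the string in `{−1,1}^{2^m}`, indexed by
`t ∈ {−1,1}^m`, whose `t`-entry is `∏_{i : s_i = −1} t_i`. -/
def Had {m : ℕ} (s : Fin m → Bool) (t : Fin m → Bool) : ℝ :=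
  ∏ i, if s i then pm (t i) else 1

/-- `x ∈ {H(s), −H(s)}` for the string `x ∈ {−1,1}^{2^m}` (indexed by `{−1,1}^m`). -/
def IsHadCodeword {m : ℕ} (x : (Fin m → Bool) → Bool) (s : Fin m → Bool) : Prop :=
  (∀ t, pm (x t) = Had s t) ∨ (∀ t, pm (x t) = -Had s t)

/-- A function of its input coordinates (indexed by `ι`) is transitive if for all
coordinates `i, j` there is a permutation `σ` of the coordinates with `σ i = j` under
which the function is invariant. -/
def IsTransitiveFn {ι α β : Type*} (F : (ι → α) → β) : Prop :=
  ∀ i j : ι, ∃ σ : Equiv.Perm ι, σ i = j ∧ ∀ x : ι → α, F (fun a => x (σ a)) = F x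

section Transitivity

variable {κ α β : Type*}

lemma invariant_trans {ι : Type*} {F : (ι → α) → β} {e f : Equiv.Perm ι}
    (he : ∀ x : ι → α, F (fun a => x (e a)) = F x)
    (hf : ∀ x : ι → α, F (fun a => x (f a)) = F x) :
    ∀ x : ι → α, F (fun a => x ((e.trans f) a)) = F x :=
  fun x => (he fun a => x (f a)).trans (hf x)

theorem isTransitiveFn_sum_of_comm_of_invariant (G : (κ → α) → (κ → α) → β)
    (hsymm : ∀ x y, G y x = G x y)
    (hinv : ∀ a b : κ, ∃ τ : Equiv.Perm κ, τ a = b ∧ ∀ x y, G (fun t => x (τ t)) y = G x y) :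
    IsTransitiveFn (fun z : κ ⊕ κ → α => G (fun t => z (Sum.inl t)) (fun t => z (Sum.inr t))) := by
  set F : (κ ⊕ κ → α) → β := fun z => G (fun t => z (Sum.inl t)) (fun t => z (Sum.inr t))
  have hswap : ∀ z, F (fun a => z (Equiv.sumComm κ κ a)) = F z := fun z => hsymm _ _
  have hleft : ∀ τ : Equiv.Perm κ, (∀ x y, G (fun t => x (τ t)) y = G x y) →
      ∀ z, F (fun a => z (Equiv.sumCongr τ (Equiv.refl κ) a)) = F z :=
    fun τ hτ z => hτ (fun t => z (Sum.inl t)) _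
  have hright : ∀ τ : Equiv.Perm κ, (∀ x y, G (fun t => x (τ t)) y = G x y) →
      ∀ z, F (fun a => z (Equiv.sumCongr (Equiv.refl κ) τ a)) = F z :=
    fun τ hτ z => (hsymm _ _).symm.trans ((hτ (fun t => z (Sum.inr t)) _).trans (hsymm _ _))
  rintro (a | a) (b | b) <;> obtain ⟨τ, hτab, hτ⟩ := hinv a b
  · exact ⟨Equiv.sumCongr τ (Equiv.refl κ), by simp [hτab], hleft τ hτ⟩
  · exact ⟨(Equiv.sumCongr τ (Equiv.refl κ)).trans (Equiv.sumComm κ κ), by simp [hτab],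
      invariant_trans (hleft τ hτ) hswap⟩
  · exact ⟨(Equiv.sumCongr (Equiv.refl κ) τ).trans (Equiv.sumComm κ κ), by simp [hτab],
      invariant_trans (hright τ hτ) hswap⟩
  · exact ⟨Equiv.sumCongr (Equiv.refl κ) τ, by simp [hτab], hright τ hτ⟩

end Transitivity

section Hadamard

variable {m : ℕ}

lemma pm_xor (a b : Bool) : pm (xor a b) = pm a * pm b := by
  cases a <;> cases b <;> norm_num [pm]

lemma pm_mul_self (b : Bool) : pm b * pm b = 1 := by
  cases b <;> norm_num [pm]

lemma IP_comm (s t : Fin m → Bool) : IP s t = IP t s := by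
  simp only [IP, Bool.and_comm]

def xorPerm (u : Fin m → Bool) : Equiv.Perm (Fin m → Bool) :=
  Function.Involutive.toPerm (fun t i => xor (t i) (u i)) fun t => by funext i; simp

@[simp]
lemma xorPerm_apply (u t : Fin m → Bool) : xorPerm u t = fun i => xor (t i) (u i) := rfl

lemma Had_xor (s t u : Fin m → Bool) : Had s (xorPerm u t) = Had s t * Had s u := by
  simp only [Had, xorPerm_apply, ← Finset.prod_mul_distrib]
  refine Finset.prod_congr rfl fun i _ => ?_
  by_cases hs : s i <;> simp [hs, pm_xor]

lemma Had_mul_self (s u : Fin m → Bool) : Had s u * Had s u = 1 := by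
  simp only [Had, ← Finset.prod_mul_distrib]
  refine Finset.prod_eq_one fun i _ => ?_
  by_cases hs : s i <;> simp [hs, pm_mul_self]

lemma IsHadCodeword.comp_xorPerm {x : (Fin m → Bool) → Bool} {s : Fin m → Bool}
    (hx : IsHadCodeword x s) (u : Fin m → Bool) :
    IsHadCodeword (fun t => x (xorPerm u t)) s := by
  rcases mul_self_eq_one_iff.mp (Had_mul_self s u) with hu | hu <;>
    rcases hx with hx | hx <;> simp only [IsHadCodeword, hx, Had_xor, hu] <;> simp

lemma isHadCodeword_comp_xorPerm_iff (x : (Fin m → Bool) → Bool) (s u : Fin m → Bool) :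
    IsHadCodeword (fun t => x (xorPerm u t)) s ↔ IsHadCodeword x s := by
  refine ⟨fun hx => ?_, fun hx => hx.comp_xorPerm u⟩
  simpa using hx.comp_xorPerm u

lemma xorPerm_xor_apply (a b : Fin m → Bool) : xorPerm (fun i => xor (a i) (b i)) a = b := by
  funext i
  simp

end Hadamard

section PartialInnerProduct

variable {m : ℕ} {h : ((Fin m → Bool) → Bool) → ((Fin m → Bool) → Bool) → ℝ}

lemma congr_left_of_isHadCodeword_iff
    (hcode : ∀ x y s t, IsHadCodeword x s → IsHadCodeword y t → h x y = IP s t)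
    (hstar : ∀ x y, ((¬ ∃ s, IsHadCodeword x s) ∨ (¬ ∃ t, IsHadCodeword y t)) → h x y = 0)
    {x x' : (Fin m → Bool) → Bool} (hxx' : ∀ s, IsHadCodeword x s ↔ IsHadCodeword x' s)
    (y : (Fin m → Bool) → Bool) : h x y = h x' y := by
  by_cases hx : ∃ s, IsHadCodeword x s
  · obtain ⟨s, hs⟩ := hx
    by_cases hy : ∃ t, IsHadCodeword y t
    · obtain ⟨t, ht⟩ := hy
      rw [hcode x y s t hs ht, hcode x' y s t ((hxx' s).mp hs) ht]
    · rw [hstar x y (Or.inr hy), hstar x' y (Or.inr hy)]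
  · have hx' : ¬ ∃ s, IsHadCodeword x' s := by simpa only [hxx'] using hx
    rw [hstar x y (Or.inl hx), hstar x' y (Or.inl hx')]

lemma comm_of_isHadCodeword
    (hcode : ∀ x y s t, IsHadCodeword x s → IsHadCodeword y t → h x y = IP s t)
    (hstar : ∀ x y, ((¬ ∃ s, IsHadCodeword x s) ∨ (¬ ∃ t, IsHadCodeword y t)) → h x y = 0)
    (x y : (Fin m → Bool) → Bool) : h y x = h x y := by
  by_cases hx : ∃ s, IsHadCodeword x s
  · by_cases hy : ∃ t, IsHadCodeword y t
    · obtain ⟨s, hs⟩ := hx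
      obtain ⟨t, ht⟩ := hy
      rw [hcode x y s t hs ht, hcode y x t s ht hs, IP_comm]
    · rw [hstar x y (Or.inr hy), hstar y x (Or.inl hy)]
  · rw [hstar x y (Or.inl hx), hstar y x (Or.inr hx)]

end PartialInnerProduct

theorem stmt_7_general (m : ℕ)
    (h : ((Fin m → Bool) → Bool) → ((Fin m → Bool) → Bool) → ℝ)
    (hcode : ∀ x y s t, IsHadCodeword x s → IsHadCodeword y t → h x y = IP s t)
    (hstar : ∀ x y,
      ((¬ ∃ s, IsHadCodeword x s) ∨ (¬ ∃ t, IsHadCodeword y t)) → h x y = 0) :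
    IsTransitiveFn (fun z : ((Fin m → Bool) ⊕ (Fin m → Bool)) → Bool =>
      h (fun t => z (Sum.inl t)) (fun t => z (Sum.inr t))) := by
  refine isTransitiveFn_sum_of_comm_of_invariant h
    (comm_of_isHadCodeword hcode hstar) fun a b => ?_
  refine ⟨xorPerm fun i => xor (a i) (b i), xorPerm_xor_apply a b, fun x y => ?_⟩
  exact congr_left_of_isHadCodeword_iff hcode hstar (fun s => isHadCodeword_comp_xorPerm_iff x s _) y

/-- The partial function `h̃` (which equals `IP_m(s,t)` when the two halves of the
input are signed Hadamard codewords `±H(s), ±H(t)`, and `0` otherwise), viewed as a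
function of its `2n` Boolean coordinates (`n = 2^m`), is transitive. -/
theorem stmt_7 (m : ℕ) (hm : 1 ≤ m)
    (h : ((Fin m → Bool) → Bool) → ((Fin m → Bool) → Bool) → ℝ)
    (hcode : ∀ x y s t, IsHadCodeword x s → IsHadCodeword y t → h x y = IP s t)
    (hstar : ∀ x y,
      ((¬ ∃ s, IsHadCodeword x s) ∨ (¬ ∃ t, IsHadCodeword y t)) → h x y = 0) :
    IsTransitiveFn (fun z : ((Fin m → Bool) ⊕ (Fin m → Bool)) → Bool =>
      h (fun t => z (Sum.inl t)) (fun t => z (Sum.inr t))) :=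
  stmt_7_general m h hcode hstar
end

section
/- Let A, B be finite sets, G : A × B → {−1,1}, μ : A × B → [0,∞) a probability distribution, n ≥ d ≥ 1 integers, and ψ : {−1,1}^n → ℝ with ψ̂(S) = 0 for every S ⊆ [n] with |S| < d. Then for all subsets A' ⊆ A^n, B' ⊆ B^n: |∑_{X ∈ A', Y ∈ B'} ψ(G(X_1,Y_1),…,G(X_n,Y_n)) · ∏_{i=1}^n μ(X_i,Y_i)| ≤ ∑_{S ⊆ [n], |S| ≥ d} |ψ̂(S)| · disc_{μ,|S|}(G). (This bounds the discrepancy of the lifted distribution against any rectangle by a Fourier-weighted sum of XOR-composed discrepancies.) -/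
/-- `disc_{μ,k}(G)`: the discrepancy of the `k`-fold XOR-composition of `G` under the
product distribution `μ^{⊗k}`, i.e. the maximum over rectangles `A' × B'` of
`|∑_{X ∈ A', Y ∈ B'} ∏_{i=1}^k G(X_i,Y_i)·μ(X_i,Y_i)|`. -/
noncomputable def discXor {A B : Type*} [Fintype A] [Fintype B]
    (G : A → B → Bool) (μ : A → B → ℝ) (k : ℕ) : ℝ :=
  ⨆ A' : Finset (Fin k → A), ⨆ B' : Finset (Fin k → B),
    |∑ X ∈ A', ∑ Y ∈ B', ∏ i, pm (G (X i) (Y i)) * μ (X i) (Y i)|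

open Finset

section Walsh

variable {n : ℕ}

lemma pm_mul_pm_add_one (a b : Bool) : pm a * pm b + 1 = if a = b then 2 else 0 := by
  cases a <;> cases b <;> norm_num [pm]

lemma sum_prod_pm_mul_pm (x y : Fin n → Bool) :
    ∑ S : Finset (Fin n), ∏ i ∈ S, pm (y i) * pm (x i) = if y = x then 2 ^ n else 0 := by
  rw [← powerset_univ, ← prod_add_one]
  simp only [pm_mul_pm_add_one, Fintype.prod_ite_zero, prod_const, card_univ,
    Fintype.card_fin, ← funext_iff]

lemma eq_sum_walsh (ψ : (Fin n → Bool) → ℝ) (x : Fin n → Bool) :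
    ψ x = ∑ S : Finset (Fin n),
      ((1 / 2 ^ n : ℝ) * ∑ y : Fin n → Bool, ψ y * ∏ i ∈ S, pm (y i)) * ∏ i ∈ S, pm (x i) := by
  simp_rw [mul_assoc, sum_mul, mul_assoc, ← prod_mul_distrib, ← mul_sum]
  rw [sum_comm]
  simp_rw [← mul_sum, sum_prod_pm_mul_pm, mul_ite, mul_zero, sum_ite_eq', if_pos (mem_univ x)]
  field_simp

lemma sum_sum_comp_mul_eq_sum_walsh {α β : Type*} (ψ : (Fin n → Bool) → ℝ)
    (f : α → β → Fin n → Bool) (w : α → β → ℝ) (A' : Finset α) (B' : Finset β) :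
    ∑ X ∈ A', ∑ Y ∈ B', ψ (f X Y) * w X Y
      = ∑ S : Finset (Fin n), ((1 / 2 ^ n : ℝ) * ∑ x : Fin n → Bool, ψ x * ∏ i ∈ S, pm (x i))
          * ∑ X ∈ A', ∑ Y ∈ B', (∏ i ∈ S, pm (f X Y i)) * w X Y := by
  set c := fun S : Finset (Fin n) => (1 / 2 ^ n : ℝ) * ∑ x, ψ x * ∏ i ∈ S, pm (x i)
  calc ∑ X ∈ A', ∑ Y ∈ B', ψ (f X Y) * w X Y
      = ∑ X ∈ A', ∑ Y ∈ B', ∑ S, c S * ((∏ i ∈ S, pm (f X Y i)) * w X Y) := by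
        simp only [eq_sum_walsh ψ (f _ _), sum_mul, mul_assoc, c]
    _ = ∑ S, ∑ X ∈ A', ∑ Y ∈ B', c S * ((∏ i ∈ S, pm (f X Y i)) * w X Y) :=
        (sum_congr rfl fun X _ => sum_comm).trans sum_comm
    _ = ∑ S, c S * ∑ X ∈ A', ∑ Y ∈ B', (∏ i ∈ S, pm (f X Y i)) * w X Y := by
        simp only [mul_sum]

end Walsh

lemma abs_sum_mul_le_of_rectangle_bound {α₁ α₂ β₁ β₂ : Type*} [Fintype α₁] [Fintype α₂]
    [Fintype β₁] [Fintype β₂] (F : α₁ → β₁ → ℝ) (W : α₂ → β₂ → ℝ) {D : ℝ}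
    (hF : ∀ U V, |∑ u ∈ U, ∑ v ∈ V, F u v| ≤ D) (hW0 : ∀ p q, 0 ≤ W p q)
    (hW1 : ∑ p, ∑ q, W p q = 1) (A' : Finset (α₁ × α₂)) (B' : Finset (β₁ × β₂)) :
    |∑ x ∈ A', ∑ y ∈ B', F x.1 y.1 * W x.2 y.2| ≤ D := by
  classical
  set Ap := fun p => univ.filter (fun u => (u, p) ∈ A')
  set Bq := fun q => univ.filter (fun v => (v, q) ∈ B')
  have fiberwiseA (f : α₁ × α₂ → ℝ) : ∑ x ∈ A', f x = ∑ p, ∑ u ∈ Ap p, f (u, p) :=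
    sum_finset_product_right A' univ Ap (by simp [Ap])
  have fiberwiseB (f : β₁ × β₂ → ℝ) : ∑ y ∈ B', f y = ∑ q, ∑ v ∈ Bq q, f (v, q) :=
    sum_finset_product_right B' univ Bq (by simp [Bq])
  have regroup : ∑ x ∈ A', ∑ y ∈ B', F x.1 y.1 * W x.2 y.2
      = ∑ p, ∑ q, W p q * ∑ u ∈ Ap p, ∑ v ∈ Bq q, F u v := by
    rw [fiberwiseA]
    simp_rw [fiberwiseB, mul_sum]
    refine sum_congr rfl fun p _ => ?_
    rw [sum_comm]
    refine sum_congr rfl fun q _ => sum_congr rfl fun u _ => sum_congr rfl fun v _ => mul_comm _ _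
  calc |∑ x ∈ A', ∑ y ∈ B', F x.1 y.1 * W x.2 y.2|
      ≤ ∑ p, ∑ q, |W p q * ∑ u ∈ Ap p, ∑ v ∈ Bq q, F u v| := by
        rw [regroup]
        exact (abs_sum_le_sum_abs _ _).trans (sum_le_sum fun p _ => abs_sum_le_sum_abs _ _)
    _ ≤ ∑ p, ∑ q, W p q * D := by
        gcongr with p _ q _
        rw [abs_mul, abs_of_nonneg (hW0 p q)]
        exact mul_le_mul_of_nonneg_left (hF _ _) (hW0 p q)
    _ = D := by simp_rw [← sum_mul, hW1, one_mul]

section Discrepancy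

variable {A B : Type*} [Fintype A] [Fintype B] (G : A → B → Bool) (μ : A → B → ℝ)

lemma abs_sum_le_discXor {k : ℕ} (A' : Finset (Fin k → A)) (B' : Finset (Fin k → B)) :
    |∑ X ∈ A', ∑ Y ∈ B', ∏ i, pm (G (X i) (Y i)) * μ (X i) (Y i)| ≤ discXor G μ k :=
  le_ciSup_of_le (Finite.bddAbove_range _) A' <|
    le_ciSup_of_le (Finite.bddAbove_range _) B' le_rfl

lemma abs_sum_le_discXor_card {κ : Type*} [Fintype κ]
    (U : Finset (κ → A)) (V : Finset (κ → B)) :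
    |∑ u ∈ U, ∑ v ∈ V, ∏ j, pm (G (u j) (v j)) * μ (u j) (v j)|
      ≤ discXor G μ (Fintype.card κ) := by
  let e := Fintype.equivFin κ
  convert abs_sum_le_discXor G μ (U.map (e.arrowCongr (.refl A)).toEmbedding)
    (V.map (e.arrowCongr (.refl B)).toEmbedding) using 2
  simp only [sum_map]
  refine sum_congr rfl fun u _ => sum_congr rfl fun v _ => ?_
  exact (e.symm.prod_comp _).symm

lemma sum_sum_prod_eq_pow {κ : Type*} [Fintype κ] [DecidableEq κ] :
    ∑ p : κ → A, ∑ q : κ → B, ∏ j, μ (p j) (q j) = (∑ a, ∑ b, μ a b) ^ Fintype.card κ := by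
  simp_rw [← Fintype.prod_sum]
  rw [← Fintype.prod_sum (fun (_ : κ) a => ∑ b, μ a b), prod_const, card_univ]

lemma abs_sum_prod_pm_mul_prod_le_discXor (hμ0 : ∀ a b, 0 ≤ μ a b) (hμ1 : ∑ a, ∑ b, μ a b = 1)
    {ι : Type*} [Fintype ι] [DecidableEq ι] (S : Finset ι)
    (A' : Finset (ι → A)) (B' : Finset (ι → B)) :
    |∑ X ∈ A', ∑ Y ∈ B', (∏ i ∈ S, pm (G (X i) (Y i))) * ∏ i, μ (X i) (Y i)|
      ≤ discXor G μ S.card := by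
  let eA := Equiv.piEquivPiSubtypeProd (· ∈ S) fun _ => A
  let eB := Equiv.piEquivPiSubtypeProd (· ∈ S) fun _ => B
  let F (u : S → A) (v : S → B) := ∏ j, pm (G (u j) (v j)) * μ (u j) (v j)
  let W (p : {i // i ∉ S} → A) (q : {i // i ∉ S} → B) := ∏ j, μ (p j) (q j)
  have split (X : ι → A) (Y : ι → B) :
      (∏ i ∈ S, pm (G (X i) (Y i))) * ∏ i, μ (X i) (Y i)
        = F (eA X).1 (eB Y).1 * W (eA X).2 (eB Y).2 := by
    rw [← Fintype.prod_subtype_mul_prod_subtype (· ∈ S), ← mul_assoc, ← prod_coe_sort S]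
    simp only [F, W, eA, eB, prod_mul_distrib, Equiv.piEquivPiSubtypeProd_apply]
    -- the two sides use different (propositionally equal) `Fintype ↥S` instances
    convert rfl
  have hW1 : ∑ p, ∑ q, W p q = 1 := by rw [sum_sum_prod_eq_pow, hμ1, one_pow]
  calc |∑ X ∈ A', ∑ Y ∈ B', (∏ i ∈ S, pm (G (X i) (Y i))) * ∏ i, μ (X i) (Y i)|
      = |∑ x ∈ A'.map eA.toEmbedding, ∑ y ∈ B'.map eB.toEmbedding, F x.1 y.1 * W x.2 y.2| := by
        simp only [sum_map, split]
        rfl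
    _ ≤ discXor G μ (Fintype.card S) :=
        abs_sum_mul_le_of_rectangle_bound F W (abs_sum_le_discXor_card G μ)
          (fun p q => prod_nonneg fun j _ => hμ0 _ _) hW1 _ _
    _ = discXor G μ S.card := by rw [Fintype.card_coe]

end Discrepancy

theorem stmt_13_general {A B : Type*} [Fintype A] [Fintype B]
    (G : A → B → Bool) (μ : A → B → ℝ)
    (hμ0 : ∀ a b, 0 ≤ μ a b) (hμ1 : ∑ a : A, ∑ b : B, μ a b = 1)
    (n d : ℕ)
    (ψ : (Fin n → Bool) → ℝ)
    (hψ : ∀ S : Finset (Fin n), S.card < d →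
      (1 / 2 ^ n : ℝ) * ∑ x : Fin n → Bool, ψ x * ∏ i ∈ S, pm (x i) = 0)
    (A' : Finset (Fin n → A)) (B' : Finset (Fin n → B)) :
    |∑ X ∈ A', ∑ Y ∈ B',
        ψ (fun i => G (X i) (Y i)) * ∏ i, μ (X i) (Y i)|
      ≤ ∑ S ∈ Finset.univ.filter (fun S : Finset (Fin n) => d ≤ S.card),
          |(1 / 2 ^ n : ℝ) * ∑ x : Fin n → Bool, ψ x * ∏ i ∈ S, pm (x i)|
            * discXor G μ S.card := by
  rw [sum_sum_comp_mul_eq_sum_walsh, sum_filter]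
  refine (abs_sum_le_sum_abs _ _).trans (sum_le_sum fun S _ => ?_)
  split_ifs with hS
  · rw [abs_mul]
    exact mul_le_mul_of_nonneg_left
      (abs_sum_prod_pm_mul_prod_le_discXor G μ hμ0 hμ1 S A' B') (abs_nonneg _)
  · rw [hψ S (not_le.mp hS), zero_mul, abs_zero]

/-- If `ψ : {−1,1}^n → ℝ` has no Fourier mass below level `d`
(`ψ̂(S) = 2^{-n} ∑_x ψ(x) χ_S(x) = 0` whenever `|S| < d`), then for every rectangle
`A' × B'`, `|∑_{X ∈ A', Y ∈ B'} ψ(G(X_1,Y_1),…,G(X_n,Y_n)) · ∏_i μ(X_i,Y_i)|`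
is at most `∑_{S ⊆ [n], |S| ≥ d} |ψ̂(S)| · disc_{μ,|S|}(G)`. -/
theorem stmt_13 {A B : Type*} [Fintype A] [Fintype B]
    (G : A → B → Bool) (μ : A → B → ℝ)
    (hμ0 : ∀ a b, 0 ≤ μ a b) (hμ1 : ∑ a : A, ∑ b : B, μ a b = 1)
    (n d : ℕ) (hd : 1 ≤ d) (hdn : d ≤ n)
    (ψ : (Fin n → Bool) → ℝ)
    (hψ : ∀ S : Finset (Fin n), S.card < d →
      (1 / 2 ^ n : ℝ) * ∑ x : Fin n → Bool, ψ x * ∏ i ∈ S, pm (x i) = 0)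
    (A' : Finset (Fin n → A)) (B' : Finset (Fin n → B)) :
    |∑ X ∈ A', ∑ Y ∈ B',
        ψ (fun i => G (X i) (Y i)) * ∏ i, μ (X i) (Y i)|
      ≤ ∑ S ∈ Finset.univ.filter (fun S : Finset (Fin n) => d ≤ S.card),
          |(1 / 2 ^ n : ℝ) * ∑ x : Fin n → Bool, ψ x * ∏ i ∈ S, pm (x i)|
            * discXor G μ S.card :=
  stmt_13_general G μ hμ0 hμ1 n d ψ hψ A' B'
end
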